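/- arXiv:2001.10728 — 3 statements merged into one kernel-verified Lean document; each statement's English description precedes it below -/
import Mathlib

section
/- Let N and K be positive integers with a sequence of positive integers N_1,...,N_K summing to N. Define sub-constellations X_1 = {±(m - 1/2) : m = 1,...,2^{N_1-1}} and, for k ≥ 2, X_k = {±(m - 1/2)·2^{N_1+...+N_{k-1}} : m = 1,...,2^{N_k-1}}. Then the sumset X_1 + X_2 + ... + X_K equals the 2^N-ary PAM constellation {±(m - 1/2) : m = 1,...,2^{N-1}}, and the decomposition is unique: if x_k, x'_k ∈ X_k for all k and ∑_k x_k = ∑_k x'_k, then x_k = x'_k for all k. -/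
/-- The `k`-th PAM sub-constellation of the UDCG decomposition with rates `N`:
`X_k = {±(m - 1/2)·2^{∑_{ℓ<k} N_ℓ} : m = 1,…,2^{N_k-1}}`. -/
def pamSub {K : ℕ} (N : Fin K → ℕ) (k : Fin K) : Set ℝ :=
  {x : ℝ | ∃ m : ℕ, 1 ≤ m ∧ m ≤ 2 ^ (N k - 1) ∧
    (x = ((m : ℝ) - 1/2) * 2 ^ (∑ ℓ ∈ Finset.Iio k, N ℓ) ∨
     x = -(((m : ℝ) - 1/2) * 2 ^ (∑ ℓ ∈ Finset.Iio k, N ℓ)))}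

/-- The `2^N`-ary PAM constellation `{±(m - 1/2) : m = 1,…,2^{N-1}}`. -/
def pamFull (N : ℕ) : Set ℝ :=
  {x : ℝ | ∃ m : ℕ, 1 ≤ m ∧ m ≤ 2 ^ (N - 1) ∧
    (x = (m : ℝ) - 1/2 ∨ x = -((m : ℝ) - 1/2))}

open Finset

/-! ### Auxiliary digit (mixed-radix) lemmas over ℕ -/

lemma pam_digit_bound (M : ℕ → ℕ) : ∀ (K : ℕ) (a : ℕ → ℕ), (∀ i < K, a i < 2 ^ M i) →
    ∑ i ∈ range K, a i * 2 ^ (∑ j ∈ range i, M j) < 2 ^ (∑ j ∈ range K, M j) := by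
  intro K
  induction K with
  | zero => intro a _; simp
  | succ K ih =>
      intro a ha
      rw [Finset.sum_range_succ, Finset.sum_range_succ (f := M), pow_add]
      have h1 := ih a (fun i hi => ha i (by omega))
      have h2 : a K < 2 ^ M K := ha K (by omega)
      nlinarith [pow_pos (by norm_num : 0 < 2) (∑ j ∈ range K, M j)]

lemma pam_digit_uniq (M : ℕ → ℕ) : ∀ (K : ℕ) (a b : ℕ → ℕ), (∀ i < K, a i < 2 ^ M i) →
    (∀ i < K, b i < 2 ^ M i) →
    ∑ i ∈ range K, a i * 2 ^ (∑ j ∈ range i, M j) =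
      ∑ i ∈ range K, b i * 2 ^ (∑ j ∈ range i, M j) →
    ∀ i < K, a i = b i := by
  intro K
  induction K with
  | zero => intro a b _ _ _ i hi; omega
  | succ K ih =>
      intro a b ha hb heq
      rw [Finset.sum_range_succ, Finset.sum_range_succ] at heq
      have hA := pam_digit_bound M K a (fun i hi => ha i (by omega))
      have hB := pam_digit_bound M K b (fun i hi => hb i (by omega))
      set P := 2 ^ (∑ j ∈ range K, M j) with hP
      have hPpos : 0 < P := by rw [hP]; positivity
      have htop : a K = b K := by
        have h1 : (∑ i ∈ range K, a i * 2 ^ (∑ j ∈ range i, M j) + a K * P) / P =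
            a K := by
          rw [Nat.add_mul_div_right _ _ hPpos, Nat.div_eq_of_lt hA]; omega
        have h2 : (∑ i ∈ range K, b i * 2 ^ (∑ j ∈ range i, M j) + b K * P) / P =
            b K := by
          rw [Nat.add_mul_div_right _ _ hPpos, Nat.div_eq_of_lt hB]; omega
        rw [← h1, ← h2, heq]
      have hrest : ∑ i ∈ range K, a i * 2 ^ (∑ j ∈ range i, M j) =
          ∑ i ∈ range K, b i * 2 ^ (∑ j ∈ range i, M j) := by
        rw [htop] at heq; omega
      have := ih a b (fun i hi => ha i (by omega)) (fun i hi => hb i (by omega)) hrest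
      intro i hi
      rcases Nat.lt_succ_iff_lt_or_eq.mp hi with h | h
      · exact this i h
      · rw [h]; exact htop

lemma pam_digit_surj (M : ℕ → ℕ) : ∀ (K : ℕ) (A : ℕ), A < 2 ^ (∑ j ∈ range K, M j) →
    ∃ a : ℕ → ℕ, (∀ i < K, a i < 2 ^ M i) ∧
      ∑ i ∈ range K, a i * 2 ^ (∑ j ∈ range i, M j) = A := by
  intro K
  induction K with
  | zero =>
      intro A hA
      simp only [Finset.range_zero, Finset.sum_empty, pow_zero] at hA
      exact ⟨fun _ => 0, fun i hi => by omega, by simp; omega⟩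
  | succ K ih =>
      intro A hA
      set P := 2 ^ (∑ j ∈ range K, M j) with hP
      have hPpos : 0 < P := by rw [hP]; positivity
      obtain ⟨a, ha, hsum⟩ := ih (A % P) (Nat.mod_lt _ hPpos)
      refine ⟨Function.update a K (A / P), ?_, ?_⟩
      · intro i hi
        rcases Nat.lt_succ_iff_lt_or_eq.mp hi with h | h
        · rw [Function.update_of_ne (by omega)]; exact ha i h
        · rw [h, Function.update_self]
          have : A < P * 2 ^ M K := by
            rw [hP, ← pow_add, ← Finset.sum_range_succ]; exact hA
          exact Nat.div_lt_of_lt_mul (by omega)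
      · rw [Finset.sum_range_succ, Function.update_self]
        have h2 : ∑ i ∈ range K, Function.update a K (A / P) i * 2 ^ (∑ j ∈ range i, M j)
            = ∑ i ∈ range K, a i * 2 ^ (∑ j ∈ range i, M j) := by
          apply Finset.sum_congr rfl
          intro i hi
          rw [Function.update_of_ne (by simp at hi; omega)]
        rw [h2, hsum, ← hP]
        exact Nat.mod_add_div' A P

lemma pam_digit_tele_real (M : ℕ → ℕ) (K : ℕ) :
    ∑ i ∈ range K, ((2:ℝ) ^ M i - 1) * 2 ^ (∑ j ∈ range i, M j) =
      2 ^ (∑ j ∈ range K, M j) - 1 := by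
  induction K with
  | zero => simp
  | succ K ih =>
      rw [Finset.sum_range_succ, ih, Finset.sum_range_succ (f := M), pow_add]
      ring

/-! ### Membership characterizations -/

lemma pam_mem_sub_iff {K : ℕ} (Nk : Fin K → ℕ) (k : Fin K) (hpos : 0 < Nk k) (x : ℝ) :
    x ∈ pamSub Nk k ↔ ∃ a : ℕ, a < 2 ^ Nk k ∧
      2 * x = (2 * (a:ℝ) - ((2:ℝ) ^ Nk k - 1)) * 2 ^ (∑ ℓ ∈ Finset.Iio k, Nk ℓ) := by
  set S : ℕ := ∑ ℓ ∈ Finset.Iio k, Nk ℓ with hS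
  set c : ℕ := 2 ^ (Nk k - 1) with hc
  have hc2 : 2 ^ Nk k = 2 * c := by
    rw [hc, ← pow_succ']
    congr 1
    omega
  have hcpos : 1 ≤ c := Nat.one_le_two_pow
  have h2c : ((2:ℝ) ^ Nk k) = 2 * c := by exact_mod_cast congrArg (Nat.cast : ℕ → ℝ) hc2
  constructor
  · rintro ⟨m, hm1, hm2, h | h⟩
    · refine ⟨c + m - 1, by omega, ?_⟩
      rw [h]
      have : ((c + m - 1 : ℕ) : ℝ) = (c:ℝ) + m - 1 := by
        push_cast [Nat.cast_sub (by omega : 1 ≤ c + m)]; ring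
      rw [this, h2c]; ring
    · refine ⟨c - m, by omega, ?_⟩
      rw [h]
      have h1 : ((c - m : ℕ) : ℝ) = (c:ℝ) - m := by
        push_cast [Nat.cast_sub (by omega : m ≤ c)]; ring
      rw [h1, h2c]; ring
  · rintro ⟨a, ha, heq⟩
    rw [h2c] at heq
    rcases le_or_gt c a with h | h
    · refine ⟨a - c + 1, by omega, by omega, Or.inl ?_⟩
      have h1 : ((a - c + 1 : ℕ) : ℝ) = (a:ℝ) - c + 1 := by
        push_cast [Nat.cast_sub h]; ring
      rw [h1]
      nlinarith [heq]
    · refine ⟨c - a, by omega, by omega, Or.inr ?_⟩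
      have h1 : ((c - a : ℕ) : ℝ) = (c:ℝ) - a := by
        push_cast [Nat.cast_sub (by omega : a ≤ c)]; ring
      rw [h1]
      nlinarith [heq]

lemma pam_mem_full_iff (N : ℕ) (hN : 0 < N) (x : ℝ) :
    x ∈ pamFull N ↔ ∃ A : ℕ, A < 2 ^ N ∧
      2 * x = 2 * (A:ℝ) - ((2:ℝ) ^ N - 1) := by
  set c : ℕ := 2 ^ (N - 1) with hc
  have hc2 : 2 ^ N = 2 * c := by
    rw [hc, ← pow_succ']
    congr 1
    omega
  have hcpos : 1 ≤ c := Nat.one_le_two_pow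
  have h2c : ((2:ℝ) ^ N) = 2 * c := by exact_mod_cast congrArg (Nat.cast : ℕ → ℝ) hc2
  constructor
  · rintro ⟨m, hm1, hm2, h | h⟩
    · refine ⟨c + m - 1, by omega, ?_⟩
      rw [h]
      have : ((c + m - 1 : ℕ) : ℝ) = (c:ℝ) + m - 1 := by
        push_cast [Nat.cast_sub (by omega : 1 ≤ c + m)]; ring
      rw [this, h2c]; ring
    · refine ⟨c - m, by omega, ?_⟩
      rw [h]
      have h1 : ((c - m : ℕ) : ℝ) = (c:ℝ) - m := by
        push_cast [Nat.cast_sub (by omega : m ≤ c)]; ring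
      rw [h1, h2c]; ring
  · rintro ⟨a, ha, heq⟩
    rw [h2c] at heq
    rcases le_or_gt c a with h | h
    · refine ⟨a - c + 1, by omega, by omega, Or.inl ?_⟩
      have h1 : ((a - c + 1 : ℕ) : ℝ) = (a:ℝ) - c + 1 := by
        push_cast [Nat.cast_sub h]; ring
      rw [h1]
      nlinarith [heq]
    · refine ⟨c - a, by omega, by omega, Or.inr ?_⟩
      have h1 : ((c - a : ℕ) : ℝ) = (c:ℝ) - a := by
        push_cast [Nat.cast_sub (by omega : a ≤ c)]; ring
      rw [h1]
      nlinarith [heq]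

theorem pam_udcg_decomposition {K N : ℕ} (hK : 0 < K) (hN : 0 < N)
    (Nk : Fin K → ℕ) (hNk : ∀ k, 0 < Nk k) (hsum : ∑ k, Nk k = N) :
    {x : ℝ | ∃ f : Fin K → ℝ, (∀ k, f k ∈ pamSub Nk k) ∧ x = ∑ k, f k} = pamFull N ∧
    (∀ f g : Fin K → ℝ, (∀ k, f k ∈ pamSub Nk k) → (∀ k, g k ∈ pamSub Nk k) →
      ∑ k, f k = ∑ k, g k → f = g) := by
  classical
  set M : ℕ → ℕ := fun i => if h : i < K then Nk ⟨i, h⟩ else 0 with hM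
  have hMval : ∀ k : Fin K, M k.val = Nk k := by
    intro k; simp [hM, k.isLt]
  have hIio : ∀ k : Fin K, (∑ ℓ ∈ Finset.Iio k, Nk ℓ) = ∑ j ∈ range k.val, M j := by
    intro k
    rw [← Nat.Iio_eq_range, ← Fin.map_valEmbedding_Iio, Finset.sum_map]
    apply Finset.sum_congr rfl
    intro ℓ _
    simp [hM, ℓ.isLt]
  have hSK : ∑ j ∈ range K, M j = N := by
    rw [← Fin.sum_univ_eq_sum_range M K, ← hsum]
    exact Finset.sum_congr rfl fun k _ => hMval k
  -- the key computation: from digits to the total sum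
  have key : ∀ (f : Fin K → ℝ) (a : Fin K → ℕ),
      (∀ k, 2 * f k = (2 * (a k:ℝ) - ((2:ℝ) ^ Nk k - 1)) * 2 ^ (∑ ℓ ∈ Finset.Iio k, Nk ℓ)) →
      2 * ∑ k, f k =
        2 * ((∑ i ∈ range K, (if h : i < K then a ⟨i, h⟩ else 0) *
              2 ^ (∑ j ∈ range i, M j) : ℕ) : ℝ) - ((2:ℝ) ^ N - 1) := by
    intro f a hfa
    have e1 : ((∑ i ∈ range K, (if h : i < K then a ⟨i, h⟩ else 0) *
          2 ^ (∑ j ∈ range i, M j) : ℕ) : ℝ)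
        = ∑ k : Fin K, (a k : ℝ) * 2 ^ (∑ ℓ ∈ Finset.Iio k, Nk ℓ) := by
      push_cast
      rw [← Fin.sum_univ_eq_sum_range
        (fun i => ((if h : i < K then a ⟨i, h⟩ else 0 : ℕ) : ℝ) * 2 ^ (∑ j ∈ range i, M j)) K]
      apply Finset.sum_congr rfl
      intro k _
      rw [dif_pos k.isLt, hIio k]
    have e2 : ((2:ℝ) ^ N - 1)
        = ∑ k : Fin K, ((2:ℝ) ^ Nk k - 1) * 2 ^ (∑ ℓ ∈ Finset.Iio k, Nk ℓ) := by
      rw [← hSK, ← pam_digit_tele_real M K,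
        ← Fin.sum_univ_eq_sum_range
          (fun i => ((2:ℝ) ^ M i - 1) * 2 ^ (∑ j ∈ range i, M j)) K]
      apply Finset.sum_congr rfl
      intro k _
      rw [hMval k, hIio k]
    rw [Finset.mul_sum, Finset.sum_congr rfl (fun k _ => hfa k), e1, e2,
      Finset.mul_sum, ← Finset.sum_sub_distrib]
    apply Finset.sum_congr rfl
    intro k _
    ring
  constructor
  · ext x
    simp only [Set.mem_setOf_eq]
    rw [pam_mem_full_iff N hN]
    constructor
    · rintro ⟨f, hf, rfl⟩
      choose a ha heq using fun k => (pam_mem_sub_iff Nk k (hNk k) (f k)).mp (hf k)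
      refine ⟨∑ i ∈ range K, (if h : i < K then a ⟨i, h⟩ else 0) *
          2 ^ (∑ j ∈ range i, M j), ?_, ?_⟩
      · rw [← hSK]
        apply pam_digit_bound
        intro i hi
        rw [dif_pos hi]
        simpa only [hM, dif_pos hi] using ha ⟨i, hi⟩
      · exact key f a heq
    · rintro ⟨A, hA, hxeq⟩
      obtain ⟨a, ha, hsA⟩ := pam_digit_surj M K A (by rw [hSK]; exact hA)
      set f : Fin K → ℝ := fun k =>
        (2 * (a k.val : ℝ) - ((2:ℝ) ^ Nk k - 1)) * 2 ^ (∑ ℓ ∈ Finset.Iio k, Nk ℓ) / 2 with hf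
      have hfk : ∀ k, 2 * f k =
          (2 * (a k.val : ℝ) - ((2:ℝ) ^ Nk k - 1)) * 2 ^ (∑ ℓ ∈ Finset.Iio k, Nk ℓ) := by
        intro k; rw [hf]; ring
      refine ⟨f, ?_, ?_⟩
      · intro k
        exact (pam_mem_sub_iff Nk k (hNk k) (f k)).mpr
          ⟨a k.val, by rw [← hMval k]; exact ha k.val k.isLt, hfk k⟩
      · have hk := key f (fun k => a k.val) hfk
        have hAA : ∑ i ∈ range K, (if h : i < K then a (⟨i, h⟩ : Fin K).val else 0) *
            2 ^ (∑ j ∈ range i, M j) = A := by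
          rw [← hsA]
          apply Finset.sum_congr rfl
          intro i hi
          simp only [Finset.mem_range] at hi
          rw [dif_pos hi]
        rw [hAA] at hk
        linarith [hk, hxeq]
  · intro f g hf hg hfg
    choose a ha hea using fun k => (pam_mem_sub_iff Nk k (hNk k) (f k)).mp (hf k)
    choose b hb heb using fun k => (pam_mem_sub_iff Nk k (hNk k) (g k)).mp (hg k)
    have hkf := key f a hea
    have hkg := key g b heb
    rw [hfg] at hkf
    have hAB : ((∑ i ∈ range K, (if h : i < K then a ⟨i, h⟩ else 0) *
          2 ^ (∑ j ∈ range i, M j) : ℕ) : ℝ)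
        = ((∑ i ∈ range K, (if h : i < K then b ⟨i, h⟩ else 0) *
          2 ^ (∑ j ∈ range i, M j) : ℕ) : ℝ) := by linarith
    have hABn := Nat.cast_inj (R := ℝ) |>.mp hAB
    have hdig := pam_digit_uniq M K _ _
      (fun i hi => by rw [dif_pos hi]; simpa only [hM, dif_pos hi] using ha ⟨i, hi⟩)
      (fun i hi => by rw [dif_pos hi]; simpa only [hM, dif_pos hi] using hb ⟨i, hi⟩)
      hABn
    funext k
    have hab : a k = b k := by
      have := hdig k.val k.isLt
      simpa only [dif_pos k.isLt, Fin.eta] using this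
    have h1 := hea k
    have h2 := heb k
    rw [hab] at h1
    linarith [h1, h2]
end

section
/- Let X_1,...,X_K be finite sets of complex numbers forming a UDCG (uniquely decomposable constellation group). Let D = diag(β_1,...,β_K) with β_k > 0, let Π be a K×K permutation matrix, and let p_1,...,p_K > 0. For an information vector s = (s_1,...,s_K) with s_k ∈ X_k, define the K×2 matrix S(s) with first column (1/√p_1,...,1/√p_K)ᵀ and second column (√p_1 s_1,...,√p_K s_K)ᵀ, and set X(s) = D^{-1/2} Π S(s). If X(s)ᴴ D X(s) = X(s̃)ᴴ D X(s̃) for two such information vectors s, s̃, then s = s̃ (and hence X(s) = X(s̃)). -/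
open Matrix
/-- Sets `X 1, …, X K` of complex numbers form a uniquely decomposable
constellation group (UDCG). -/
def IsUDCG {K : ℕ} (X : Fin K → Set ℂ) : Prop :=
  ∀ x x' : Fin K → ℂ, (∀ k, x k ∈ X k) → (∀ k, x' k ∈ X k) →
    ∑ k, x k = ∑ k, x' k → x = x'

/-- The `K × 2` signal matrix with first column `(1/√p_k)_k` and second column
`(√p_k s_k)_k`. -/
noncomputable def sigMat {K : ℕ} (p : Fin K → ℝ) (s : Fin K → ℂ) :
    Matrix (Fin K) (Fin 2) ℂ :=
  Matrix.of fun k t =>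
    if t = 0 then ((1 / Real.sqrt (p k) : ℝ) : ℂ) else ((Real.sqrt (p k) : ℝ) : ℂ) * s k

/-!
Write `X(s) = A S(s)` with `A = D^{-1/2} Π`. Since `Aᴴ D A = Πᵀ Π = 1`, the weighted Gram matrix
`X(s)ᴴ D X(s)` equals `S(s)ᴴ S(s)`, whose off-diagonal entry is `∑ₖ (1/√pₖ)(√pₖ sₖ) = ∑ₖ sₖ`.
Equal Gram matrices therefore give equal sums, and the UDCG property recovers `s`.
-/

lemma conjTranspose_mul_mul_mul_eq_gram {m n l R : Type*} [Fintype m] [Fintype n]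
    [DecidableEq n] [CommSemiring R] [StarRing R] {A : Matrix m n R} {D : Matrix m m R}
    (hA : Aᴴ * D * A = 1) (S : Matrix n l R) :
    (A * S)ᴴ * D * (A * S) = Sᴴ * S := by
  calc (A * S)ᴴ * D * (A * S) = Sᴴ * (Aᴴ * D * A) * S := by
        simp only [conjTranspose_mul, Matrix.mul_assoc]
    _ = Sᴴ * S := by rw [hA, Matrix.mul_one]

lemma conjTranspose_permMatrix_mul_self {n R : Type*} [Fintype n] [DecidableEq n]
    [NonAssocSemiring R] [StarRing R] (σ : Equiv.Perm n) :
    (σ.permMatrix R)ᴴ * σ.permMatrix R = 1 := by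
  rw [conjTranspose_permMatrix, ← permMatrix_mul, mul_inv_cancel, permMatrix_one]

lemma conjTranspose_diagonal_inv_sqrt_mul_diagonal_mul {n : Type*} [Fintype n] [DecidableEq n]
    {β : n → ℝ} (hβ : ∀ k, 0 < β k) :
    (diagonal fun k => ((Real.sqrt (β k))⁻¹ : ℂ))ᴴ * diagonal (fun k => ((β k : ℝ) : ℂ)) *
      diagonal (fun k => ((Real.sqrt (β k))⁻¹ : ℂ)) = 1 := by
  rw [diagonal_conjTranspose, diagonal_mul_diagonal, diagonal_mul_diagonal, ← diagonal_one]
  congr 1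
  funext k
  have hsqrt : (Real.sqrt (β k) : ℂ) ≠ 0 := by exact_mod_cast (Real.sqrt_pos.mpr (hβ k)).ne'
  have hsq : ((Real.sqrt (β k) : ℝ) : ℂ) ^ 2 = β k := by
    exact_mod_cast Real.sq_sqrt (hβ k).le
  simp only [Pi.star_apply, star_inv₀, Complex.star_def, Complex.conj_ofReal]
  rw [← hsq]
  field_simp

lemma conjTranspose_sigMat_mul_self_apply_zero_one {K : ℕ} {p : Fin K → ℝ} (hp : ∀ k, 0 < p k)
    (s : Fin K → ℂ) :
    ((sigMat p s)ᴴ * sigMat p s) 0 1 = ∑ k, s k := by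
  rw [mul_apply]
  refine Finset.sum_congr rfl fun k _ => ?_
  have hsqrt : (Real.sqrt (p k) : ℂ) ≠ 0 := by exact_mod_cast (Real.sqrt_pos.mpr (hp k)).ne'
  simp only [sigMat, conjTranspose_apply, of_apply, if_true, one_ne_zero, if_false,
    Complex.star_def, Complex.conj_ofReal]
  push_cast
  field_simp

theorem ufmustm_unique_decoding {K : ℕ} (X : Fin K → Set ℂ) (hX : IsUDCG X)
    (β : Fin K → ℝ) (hβ : ∀ k, 0 < β k) (π : Equiv.Perm (Fin K))
    (p : Fin K → ℝ) (hp : ∀ k, 0 < p k)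
    (s s' : Fin K → ℂ) (hs : ∀ k, s k ∈ X k) (hs' : ∀ k, s' k ∈ X k)
    (Xmat : (Fin K → ℂ) → Matrix (Fin K) (Fin 2) ℂ)
    (hXmat : ∀ v, Xmat v =
      Matrix.diagonal (fun k => ((Real.sqrt (β k))⁻¹ : ℂ)) * π.permMatrix ℂ * sigMat p v)
    (hGram : (Xmat s)ᴴ * Matrix.diagonal (fun k => ((β k : ℝ) : ℂ)) * Xmat s =
             (Xmat s')ᴴ * Matrix.diagonal (fun k => ((β k : ℝ) : ℂ)) * Xmat s') :
    s = s' ∧ Xmat s = Xmat s' := by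
  have hA : (diagonal (fun k => ((Real.sqrt (β k))⁻¹ : ℂ)) * π.permMatrix ℂ)ᴴ *
      diagonal (fun k => ((β k : ℝ) : ℂ)) *
      (diagonal (fun k => ((Real.sqrt (β k))⁻¹ : ℂ)) * π.permMatrix ℂ) = 1 := by
    rw [conjTranspose_mul_mul_mul_eq_gram (conjTranspose_diagonal_inv_sqrt_mul_diagonal_mul hβ),
      conjTranspose_permMatrix_mul_self]
  have hgram : ∀ v, (Xmat v)ᴴ * diagonal (fun k => ((β k : ℝ) : ℂ)) * Xmat v =
      (sigMat p v)ᴴ * sigMat p v := fun v => by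
    rw [hXmat, conjTranspose_mul_mul_mul_eq_gram hA]
  have hsum : ∑ k, s k = ∑ k, s' k := by
    rw [← conjTranspose_sigMat_mul_self_apply_zero_one hp,
      ← conjTranspose_sigMat_mul_self_apply_zero_one hp, ← hgram, ← hgram, hGram]
  have hss : s = s' := hX s s' hs hs' hsum
  exact ⟨hss, hss ▸ rfl⟩
end

section
/- Fix a positive integer K ≥ 2 and positive rates N_1,...,N_K. For k = 1,...,K let V_k = {±(m − 1/2)·2^{∑_{ℓ<k} N_ℓ} : m = 1,...,2^{N_k−1}} be PAM sub-constellations. Define f₆(v) = 2 ∑_{ℓ=1}^{K−1} v_ℓ ∑_{k=ℓ+1}^{K} v_k for v ∈ V_1 × ... × V_K. Then f₆ is minimized at the point v* with v*_k = −(2^{N_k−1} − 1/2)·2^{∑_{ℓ<k} N_ℓ} for k < K and v*_K = +(2^{N_K−1} − 1/2)·2^{∑_{ℓ<K} N_ℓ} (equivalently, at its negation). -/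
/-- The cross-term objective `f₆(v) = 2 ∑_{ℓ} v_ℓ ∑_{k>ℓ} v_k`. -/
def fSix {K : ℕ} (v : Fin K → ℝ) : ℝ :=
  2 * ∑ ℓ, v ℓ * ∑ k ∈ Finset.Ioi ℓ, v k

/-! Since `f₆(v) = (∑ v)² - ∑ v²`, splitting off the last coordinate `x` and writing `s` for the
sum of the others gives `f₆(v) = ((s + x)² - x²) - ∑_{k<K} v_k²`. With `S_k = ∑_{ℓ<k} N_ℓ` and
`N_k ≥ 1`, the peak `(2^{N_k-1} - 1/2)·2^{S_k}` of `V_k` is `(2^{S_{k+1}} - 2^{S_k})/2`, so the peaks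
of the first `K - 1` constellations telescope to `(2^{S_K} - 1)/2 < 2^{S_K}/2 ≤ |x|`. Hence
`|s| ≤ |x|`, and then both parts are minimised by putting every coordinate at its peak, the first
`K - 1` opposing the last. -/

open Finset

lemma Fin.sum_univ_succ_sub_castSucc {M : Type*} [AddCommGroup M] {n : ℕ} (f : Fin (n + 1) → M) :
    ∑ i : Fin n, (f i.succ - f i.castSucc) = f (Fin.last n) - f 0 := by
  induction n with
  | zero => simp
  | succ n ih =>
    rw [Fin.sum_univ_castSucc]
    simp only [Fin.succ_castSucc, ih (fun i => f i.castSucc), Fin.succ_last, Fin.castSucc_zero]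
    abel

lemma Fin.sum_Iio_succ {M : Type*} [AddCommMonoid M] {n : ℕ} (f : Fin (n + 1) → M) (k : Fin n) :
    ∑ i ∈ Iio k.succ, f i = ∑ i ∈ Iio k.castSucc, f i + f k.castSucc := by
  rw [sum_Iio_add_eq_sum_Iic]
  rfl

lemma two_mul_sum_mul_sum_Ioi {R : Type*} [CommRing R] {n : ℕ} (v : Fin n → R) :
    2 * ∑ ℓ, v ℓ * ∑ k ∈ Ioi ℓ, v k = (∑ k, v k) ^ 2 - ∑ k, v k ^ 2 := by
  induction n with
  | zero => simp
  | succ n ih =>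
    simp only [Fin.sum_univ_succ (n := n), Fin.sum_Ioi_zero, Fin.sum_Ioi_succ]
    linear_combination ih (fun k => v k.succ)

lemma fSix_eq_sq_sum_sub_sum_sq {n : ℕ} (v : Fin n → ℝ) :
    fSix v = (∑ k, v k) ^ 2 - ∑ k, v k ^ 2 :=
  two_mul_sum_mul_sum_Ioi v

lemma neg_add_sq_sub_sq_le {s x T B : ℝ} (hsT : |s| ≤ T) (hTx : T ≤ |x|) (hxB : |x| ≤ B) :
    (-T + B) ^ 2 - B ^ 2 ≤ (s + x) ^ 2 - x ^ 2 := by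
  have hsx : -(|s| * |x|) ≤ s * x := abs_mul s x ▸ neg_abs_le (s * x)
  nlinarith [mul_nonneg (sub_nonneg.2 hsT) (by linarith : 0 ≤ 2 * B - T - |s|),
    mul_nonneg (abs_nonneg s) (sub_nonneg.2 hxB), sq_abs s]

theorem fSix_opposed_le {n : ℕ} (M v : Fin (n + 1) → ℝ) (hv : ∀ k, |v k| ≤ M k)
    (hlast : ∑ k : Fin n, M k.castSucc ≤ |v (Fin.last n)|) :
    fSix (fun k => if k = Fin.last n then M k else -M k) ≤ fSix v := by
  have hsum : |∑ k : Fin n, v k.castSucc| ≤ ∑ k : Fin n, M k.castSucc :=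
    (abs_sum_le_sum_abs _ _).trans (sum_le_sum fun k _ => hv _)
  have hsq : ∑ k : Fin n, v k.castSucc ^ 2 ≤ ∑ k : Fin n, M k.castSucc ^ 2 :=
    sum_le_sum fun k _ => sq_le_sq.2 ((hv _).trans (le_abs_self _))
  simp only [fSix_eq_sq_sum_sub_sum_sq, Fin.sum_univ_castSucc, Fin.castSucc_ne_last, if_true,
    if_false, neg_sq, sum_neg_distrib]
  linarith [neg_add_sq_sub_sq_le hsum hlast (hv _)]

section Pam

variable {n : ℕ} (N : Fin n → ℕ)

noncomputable def pamPeak (k : Fin n) : ℝ :=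
  ((2 : ℝ) ^ (N k - 1) - 1 / 2) * 2 ^ (∑ ℓ ∈ Iio k, N ℓ)

lemma pamPeak_mem (k : Fin n) : pamPeak N k ∈ pamSub N k :=
  ⟨2 ^ (N k - 1), Nat.one_le_two_pow, le_rfl, Or.inl (by push_cast; rfl)⟩

lemma neg_pamPeak_mem (k : Fin n) : -pamPeak N k ∈ pamSub N k :=
  ⟨2 ^ (N k - 1), Nat.one_le_two_pow, le_rfl, Or.inr (by push_cast; rfl)⟩

variable {N}

lemma exists_abs_eq_of_mem_pamSub {k : Fin n} {x : ℝ} (hx : x ∈ pamSub N k) :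
    ∃ m : ℕ, 1 ≤ m ∧ (m : ℝ) ≤ 2 ^ (N k - 1) ∧
      |x| = ((m : ℝ) - 1 / 2) * 2 ^ (∑ ℓ ∈ Iio k, N ℓ) := by
  obtain ⟨m, hm1, hm2, hx⟩ := hx
  have hm : (1 : ℝ) ≤ m := by exact_mod_cast hm1
  have hpos : 0 < ((m : ℝ) - 1 / 2) * 2 ^ (∑ ℓ ∈ Iio k, N ℓ) :=
    mul_pos (by linarith) (by positivity)
  refine ⟨m, hm1, by exact_mod_cast hm2, ?_⟩
  rcases hx with rfl | rfl
  · exact abs_of_pos hpos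
  · rw [abs_neg, abs_of_pos hpos]

lemma abs_le_pamPeak_of_mem {k : Fin n} {x : ℝ} (hx : x ∈ pamSub N k) : |x| ≤ pamPeak N k := by
  obtain ⟨m, -, hm, hx⟩ := exists_abs_eq_of_mem_pamSub hx
  rw [hx, pamPeak]
  gcongr

lemma two_pow_div_two_le_abs_of_mem {k : Fin n} {x : ℝ} (hx : x ∈ pamSub N k) :
    (2 : ℝ) ^ (∑ ℓ ∈ Iio k, N ℓ) / 2 ≤ |x| := by
  obtain ⟨m, hm, -, hx⟩ := exists_abs_eq_of_mem_pamSub hx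
  have : (1 : ℝ) ≤ m := by exact_mod_cast hm
  rw [hx]
  nlinarith [pow_pos (two_pos : (0 : ℝ) < 2) (∑ ℓ ∈ Iio k, N ℓ)]

end Pam

lemma pamPeak_castSucc {n : ℕ} {N : Fin (n + 1) → ℕ} (k : Fin n) (hk : 0 < N k.castSucc) :
    pamPeak N k.castSucc =
      (2 : ℝ) ^ (∑ ℓ ∈ Iio k.succ, N ℓ) / 2 - (2 : ℝ) ^ (∑ ℓ ∈ Iio k.castSucc, N ℓ) / 2 := by
  obtain ⟨d, hd⟩ := Nat.exists_eq_add_of_lt hk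
  rw [pamPeak, Fin.sum_Iio_succ, hd, pow_add]
  simp only [zero_add, Nat.add_sub_cancel, pow_succ]
  ring

lemma sum_pamPeak_castSucc {n : ℕ} {N : Fin (n + 1) → ℕ} (hN : ∀ k, 0 < N k) :
    ∑ k : Fin n, pamPeak N k.castSucc = ((2 : ℝ) ^ (∑ ℓ ∈ Iio (Fin.last n), N ℓ) - 1) / 2 := by
  simp only [fun k => pamPeak_castSucc k (hN k.castSucc)]
  rw [Fin.sum_univ_succ_sub_castSucc (fun k => (2 : ℝ) ^ (∑ ℓ ∈ Iio k, N ℓ) / 2),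
    show Iio (0 : Fin (n + 1)) = ∅ from Iio_bot, sum_empty, pow_zero]
  ring

theorem fSix_minimizer_general {K : ℕ} (N : Fin (K + 1) → ℕ)
    (hN : ∀ k, 0 < N k) (vstar : Fin (K + 1) → ℝ)
    (hvstar : ∀ k, vstar k =
      if k = Fin.last K then
        (((2 : ℝ) ^ (N k - 1) - 1/2) * 2 ^ (∑ ℓ ∈ Finset.Iio k, N ℓ))
      else
        -(((2 : ℝ) ^ (N k - 1) - 1/2) * 2 ^ (∑ ℓ ∈ Finset.Iio k, N ℓ))) :
    (∀ k, vstar k ∈ pamSub N k) ∧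
    ∀ v : Fin (K + 1) → ℝ, (∀ k, v k ∈ pamSub N k) → fSix vstar ≤ fSix v := by
  obtain rfl : vstar = fun k => if k = Fin.last K then pamPeak N k else -pamPeak N k :=
    funext hvstar
  refine ⟨fun k => ?_, fun v hv => fSix_opposed_le _ v (fun k => abs_le_pamPeak_of_mem (hv k)) ?_⟩
  · dsimp only
    split_ifs
    exacts [pamPeak_mem N k, neg_pamPeak_mem N k]
  · rw [sum_pamPeak_castSucc hN]
    linarith [two_pow_div_two_le_abs_of_mem (hv (Fin.last K))]

theorem fSix_minimizer {K : ℕ} (hK : 1 ≤ K) (N : Fin (K + 1) → ℕ)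
    (hN : ∀ k, 0 < N k) (vstar : Fin (K + 1) → ℝ)
    (hvstar : ∀ k, vstar k =
      if k = Fin.last K then
        (((2 : ℝ) ^ (N k - 1) - 1/2) * 2 ^ (∑ ℓ ∈ Finset.Iio k, N ℓ))
      else
        -(((2 : ℝ) ^ (N k - 1) - 1/2) * 2 ^ (∑ ℓ ∈ Finset.Iio k, N ℓ))) :
    (∀ k, vstar k ∈ pamSub N k) ∧
    ∀ v : Fin (K + 1) → ℝ, (∀ k, v k ∈ pamSub N k) → fSix vstar ≤ fSix v :=
  fSix_minimizer_general N hN vstar hvstar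
end
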